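/- If the stepsizes satisfy γ_i < 2/(L_i + 2τ L_res) for every i ∈ {1,…,m}, then for every k ∈ ℕ one has F(x^k) ≤ F(x^0). -/

import Mathlib

open MeasureTheory ProbabilityTheory Filter Topology Set
open scoped BigOperators RealInnerProductSpace ENNReal

noncomputable section

set_option synthInstance.maxHeartbeats 400000
set_option maxHeartbeats 1000000

variable {m : ℕ} {H : Fin m → Type*}
  [∀ i, NormedAddCommGroup (H i)] [∀ i, InnerProductSpace ℝ (H i)]

/-- The Hilbert direct sum `H = H₁ ⊕ ⋯ ⊕ H_m` is complete when each factor is. -/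
instance [∀ i, CompleteSpace (H i)] : CompleteSpace (PiLp 2 H) :=
  inferInstance

/-- Weighted squared norm `∑ i, w i * ‖u i‖²` on the direct sum. -/
def wnormSq (w : Fin m → ℝ) (u : PiLp 2 H) : ℝ := ∑ i, w i * ‖u i‖ ^ 2

/-- Weighted inner product `∑ i, w i * ⟪u i, v i⟫` on the direct sum. -/
def winner (w : Fin m → ℝ) (u v : PiLp 2 H) : ℝ := ∑ i, w i * ⟪u i, v i⟫

/-- `upd x i u` replaces the `i`-th coordinate of `x` by `u`. -/
def upd (x : PiLp 2 H) (i : Fin m) (u : H i) : PiLp 2 H := WithLp.toLp 2 (Function.update (WithLp.ofLp x) i u)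

/-- `IsProx c gi v pt` asserts that `pt` is the unique minimizer of
`u ↦ gi u + (1/(2c))‖u − v‖²`, i.e. `pt = prox_{c·gi}(v)`. -/
def IsProx {E : Type*} [NormedAddCommGroup E] (c : ℝ) (gi : E → ℝ) (v pt : E) : Prop :=
  (∀ u : E, gi pt + 1 / (2 * c) * ‖pt - v‖ ^ 2 ≤ gi u + 1 / (2 * c) * ‖u - v‖ ^ 2) ∧
  (∀ u : E, gi u + 1 / (2 * c) * ‖u - v‖ ^ 2 ≤ gi pt + 1 / (2 * c) * ‖pt - v‖ ^ 2 → u = pt)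

/-- The objective `F = f + g`, where `g x = ∑ i, g i (x i)`. -/
def Fobj (f : PiLp 2 H → ℝ) (g : ∀ i, H i → ℝ) (z : PiLp 2 H) : ℝ := f z + ∑ i, g i (z i)

/-- Delayed iterate `x̂^k`, coordinate `j` reads `x^{k - d^k_j}` (deterministic trajectory,
indices in `ℤ`, with `x^n = x^0` for `n ≤ 0`). -/
def xhatD (x : ℤ → PiLp 2 H) (d : ℕ → Fin m → ℕ) (k : ℕ) : PiLp 2 H :=
  WithLp.toLp 2 (fun j => x ((k : ℤ) - d k j) j)

/-- Delayed iterate `x̂^k` (random trajectory). -/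
def xhatP {Ω : Type*} (x : ℤ → Ω → PiLp 2 H) (d : ℕ → Fin m → ℕ) (k : ℕ) (ω : Ω) :
    PiLp 2 H :=
  WithLp.toLp 2 (fun j => x ((k : ℤ) - d k j) ω j)

/-- `alphaT c τ x k = c * ∑_{h=k-τ}^{k-1} (h-(k-τ)+1) ‖x^{h+1} - x^h‖²`. -/
def alphaT (c : ℝ) (τ : ℕ) (x : ℤ → PiLp 2 H) (k : ℕ) : ℝ :=
  c * ∑ j ∈ Finset.range τ,
    ((j : ℝ) + 1) * ‖x ((k : ℤ) - τ + j + 1) - x ((k : ℤ) - τ + j)‖ ^ 2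

/-- `alphaV p c τ x k ω = c * ∑_{h=k-τ}^{k-1} (h-(k-τ)+1) ‖x^{h+1} - x^h‖²_V`. -/
def alphaV {Ω : Type*} (p : Fin m → ℝ) (c : ℝ) (τ : ℕ) (x : ℤ → Ω → PiLp 2 H)
    (k : ℕ) (ω : Ω) : ℝ :=
  c * ∑ j ∈ Finset.range τ,
    ((j : ℝ) + 1) * wnormSq p (x ((k : ℤ) - τ + j + 1) ω - x ((k : ℤ) - τ + j) ω)

/-- The constant `L_res^V/(2√p_max)` appearing in `α_k`, where `L_res^V = L_res √(p_max/p_min)`. -/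
def alphaConst (Lres pmax pmin : ℝ) : ℝ :=
  Lres * Real.sqrt (pmax / pmin) / (2 * Real.sqrt pmax)

/-- The σ-algebra generated by `i_0, …, i_{k-1}`. -/
def pastFiltration {Ω : Type*} [MeasurableSpace Ω] (idx : ℕ → Ω → Fin m) (k : ℕ) :
    MeasurableSpace Ω :=
  ⨆ j ∈ Finset.range k, MeasurableSpace.comap (idx j) ⊤

/-- The random index set `J(k) = {h ∈ {k-τ,…,k-1} : d^k_{i_h} ≥ k-h}`. -/
def Jset {Ω : Type*} (idx : ℕ → Ω → Fin m) (d : ℕ → Fin m → ℕ) (τ k : ℕ) (ω : Ω) :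
    Finset ℕ :=
  (Finset.Ico (k - τ) k).filter fun h => k - h ≤ d k (idx h ω)

/-!
The energy `E k = F (x k) + (L_res / 2) ∑_{t < τ} (t + 1) ‖x (k - τ + t + 1) - x (k - τ + t)‖²`
(`alphaT`) is nonincreasing, and `E 0 = F (x 0)`. In step `k` only block `i = i_k` moves, by `Δ`.
The block descent lemma and the optimality of the prox point give
`F (x (k+1)) ≤ F (x k) + ⟪∇_i f (x k) - ∇_i f (x̂ k), Δ⟫ + (L_i / 2 - 1 / γ_i) ‖Δ‖²`.
Since `x̂ k` is reached from `x k` by undoing at most the last `τ` single-block steps, the gradient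
error is at most `L_res ∑_{t < τ} ‖x (k - τ + t + 1) - x (k - τ + t)‖`. Young's inequality splits
the cross term into `(L_res / 2) ∑_{t < τ} ‖…‖²` and `(τ L_res / 2) ‖Δ‖²`; the first is cancelled
by the drop of the weighted sum in `E`, which costs another `(τ L_res / 2) ‖Δ‖²`. The total
coefficient `L_i / 2 + τ L_res - 1 / γ_i` of `‖Δ‖²` is negative by the stepsize rule.
-/

omit [∀ i, NormedAddCommGroup (H i)] [∀ i, InnerProductSpace ℝ (H i)] in
@[simp]
lemma upd_apply_self (z : PiLp 2 H) (i : Fin m) (u : H i) : upd z i u i = u := by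
  simp [upd]

omit [∀ i, NormedAddCommGroup (H i)] [∀ i, InnerProductSpace ℝ (H i)] in
lemma upd_apply_of_ne (z : PiLp 2 H) {i j : Fin m} (h : j ≠ i) (u : H i) :
    upd z i u j = z j := by
  simp [upd, Function.update_of_ne h]

omit [∀ i, NormedAddCommGroup (H i)] [∀ i, InnerProductSpace ℝ (H i)] in
@[simp]
lemma upd_self (z : PiLp 2 H) (i : Fin m) : upd z i (z i) = z := by
  ext; simp [upd]

omit [∀ i, NormedAddCommGroup (H i)] [∀ i, InnerProductSpace ℝ (H i)] in
lemma eq_upd_of_forall_ne {y z : PiLp 2 H} {i : Fin m} (h : ∀ j, j ≠ i → y j = z j) :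
    y = upd z i (y i) := by
  ext j
  by_cases hj : j = i
  · subst hj; simp
  · rw [upd_apply_of_ne _ hj, h j hj]

lemma upd_add_smul (z : PiLp 2 H) (i : Fin m) (u v : H i) (t : ℝ) :
    upd z i (u + t • v) = upd z i u + t • upd 0 i v := by
  ext j
  by_cases hj : j = i
  · subst hj; simp
  · simp [upd_apply_of_ne _ hj]

lemma inner_upd_zero_right (z : PiLp 2 H) (i : Fin m) (v : H i) :
    ⟪z, upd 0 i v⟫ = ⟪z i, v⟫ := by
  rw [PiLp.inner_apply, Finset.sum_eq_single i (fun j _ hj => by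
    rw [upd_apply_of_ne _ hj, PiLp.zero_apply, inner_zero_right]) (by simp), upd_apply_self]

omit [∀ i, InnerProductSpace ℝ (H i)] in
lemma sum_norm_apply_eq_norm_of_forall_ne {u : PiLp 2 H} {i : Fin m}
    (h : ∀ j, j ≠ i → u j = 0) : ∑ j, ‖u j‖ = ‖u‖ := by
  have hsum : ∀ p : ℕ, p ≠ 0 → ∑ j, ‖u j‖ ^ p = ‖u i‖ ^ p := fun p hp =>
    Finset.sum_eq_single i (fun j _ hj => by rw [h j hj, norm_zero, zero_pow hp]) (by simp)
  rw [PiLp.norm_eq_of_L2, hsum 2 two_ne_zero, Real.sqrt_sq (norm_nonneg _)]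
  simpa using hsum 1 one_ne_zero

omit [∀ i, InnerProductSpace ℝ (H i)] in
lemma norm_sub_le_mul_sum_norm_apply_sub {E : Type*} [SeminormedAddCommGroup E]
    {F : PiLp 2 H → E} {K : ℝ}
    (hF : ∀ (z : PiLp 2 H) (i : Fin m) (u u' : H i),
      ‖F (upd z i u) - F (upd z i u')‖ ≤ K * ‖u - u'‖)
    (y z : PiLp 2 H) : ‖F z - F y‖ ≤ K * ∑ j, ‖z j - y j‖ := by
  classical
  let w : Finset (Fin m) → PiLp 2 H := fun s => WithLp.toLp 2 fun j => if j ∈ s then z j else y j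
  suffices ∀ s, ‖F (w s) - F y‖ ≤ K * ∑ j ∈ s, ‖z j - y j‖ by
    simpa [w] using this Finset.univ
  intro s
  induction s using Finset.induction_on with
  | empty => simp [w]
  | @insert j s hj ih =>
    have hins : w (insert j s) = upd (w s) j (z j) := by
      ext l
      by_cases hl : l = j
      · subst hl; simp [w]
      · simp [w, hl, upd_apply_of_ne _ hl]
    have hws : w s = upd (w s) j (y j) := by
      ext l
      by_cases hl : l = j
      · subst hl; simp [w, hj]
      · simp [upd_apply_of_ne _ hl]
    have hstep : ‖F (w (insert j s)) - F (w s)‖ ≤ K * ‖z j - y j‖ := by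
      rw [hins]; nth_rewrite 2 [hws]
      exact hF _ j _ _
    calc ‖F (w (insert j s)) - F y‖
        ≤ ‖F (w (insert j s)) - F (w s)‖ + ‖F (w s) - F y‖ :=
          norm_sub_le_norm_sub_add_norm_sub _ _ _
      _ ≤ K * ∑ l ∈ insert j s, ‖z l - y l‖ := by
        rw [Finset.sum_insert hj, mul_add]; linarith

lemma le_add_deriv_add_of_deriv_sub_le {φ φ' : ℝ → ℝ} {K : ℝ}
    (hφ : ∀ t, HasDerivAt φ (φ' t) t) (hφ' : ∀ t ∈ Ioo (0 : ℝ) 1, φ' t - φ' 0 ≤ K * t) :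
    φ 1 ≤ φ 0 + φ' 0 + K / 2 := by
  let ψ : ℝ → ℝ := fun t => φ t - t * φ' 0 - K / 2 * t ^ 2
  have hψ : ∀ t, HasDerivAt ψ (φ' t - φ' 0 - K * t) t := fun t => by
    refine (((hφ t).sub ((hasDerivAt_id' t).mul_const (φ' 0))).sub
      ((hasDerivAt_pow 2 t).const_mul (K / 2))).congr_deriv ?_
    push_cast; ring
  have hanti : AntitoneOn ψ (Icc 0 1) := by
    refine antitoneOn_of_hasDerivWithinAt_nonpos (convex_Icc 0 1)
      (Differentiable.continuous fun t => (hψ t).differentiableAt).continuousOn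
      (fun t _ => (hψ t).hasDerivWithinAt) ?_
    intro t ht
    rw [interior_Icc] at ht
    linarith [hφ' t ht]
  have := hanti (left_mem_Icc.2 zero_le_one) (right_mem_Icc.2 zero_le_one) zero_le_one
  simp only [ψ] at this
  linarith

variable [∀ i, CompleteSpace (H i)] in
lemma le_add_inner_add_sq_of_lipschitz_partial {f : PiLp 2 H → ℝ} {f' : PiLp 2 H → PiLp 2 H}
    (hf : ∀ z, HasGradientAt f (f' z) z) {i : Fin m} {Li : ℝ}
    (hLi : ∀ (z : PiLp 2 H) (u u' : H i), ‖f' (upd z i u) i - f' (upd z i u') i‖ ≤ Li * ‖u - u'‖)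
    (z : PiLp 2 H) (u u' : H i) :
    f (upd z i u') ≤ f (upd z i u) + ⟪f' (upd z i u) i, u' - u⟫ + Li / 2 * ‖u' - u‖ ^ 2 := by
  set v := u' - u
  let c : ℝ → PiLp 2 H := fun t => upd z i (u + t • v)
  have hc : ∀ t, HasDerivAt c (upd 0 i v) t := fun t => by
    simp only [c, upd_add_smul]
    simpa using ((hasDerivAt_id t).smul_const (upd 0 i v)).const_add (upd z i u)
  have hφ : ∀ t, HasDerivAt (fun s => f (c s)) ⟪f' (c t) i, v⟫ t := fun t => by
    have h := (hf (c t)).hasFDerivAt.comp_hasDerivAt t (hc t)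
    rwa [InnerProductSpace.toDual_apply_apply, inner_upd_zero_right] at h
  have hφ' : ∀ t ∈ Ioo (0 : ℝ) 1,
      ⟪f' (c t) i, v⟫ - ⟪f' (c 0) i, v⟫ ≤ Li * ‖v‖ ^ 2 * t := fun t ht => by
    have hlip : ‖f' (c t) i - f' (c 0) i‖ ≤ Li * (t * ‖v‖) := by
      simpa [c, norm_smul, abs_of_pos ht.1] using hLi z (u + t • v) (u + (0 : ℝ) • v)
    rw [← inner_sub_left]
    calc _ ≤ ‖f' (c t) i - f' (c 0) i‖ * ‖v‖ := real_inner_le_norm _ _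
      _ ≤ Li * (t * ‖v‖) * ‖v‖ := mul_le_mul_of_nonneg_right hlip (norm_nonneg v)
      _ = _ := by ring
  have := le_add_deriv_add_of_deriv_sub_le hφ hφ'
  simp only [c, zero_smul, add_zero, one_smul, v, add_sub_cancel] at this
  linarith

lemma nonneg_of_forall_nonneg_add_mul {a b : ℝ} (h : ∀ t ∈ Ioo (0 : ℝ) 1, 0 ≤ a + b * t) :
    0 ≤ a := by
  have hcont : Continuous fun t : ℝ => a + b * t := by fun_prop
  have hlim : Tendsto (fun t => a + b * t) (𝓝[>] 0) (𝓝 a) := by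
    simpa using (hcont.tendsto 0).mono_left nhdsWithin_le_nhds
  exact ge_of_tendsto hlim (eventually_of_mem (Ioo_mem_nhdsGT one_pos) h)

lemma IsProx.le_add_inner {E : Type*} [NormedAddCommGroup E] [InnerProductSpace ℝ E]
    {c : ℝ} {gi : E → ℝ} {v p : E} (hp : IsProx c gi v p) (hc : 0 < c)
    (hgi : ConvexOn ℝ univ gi) (u : E) : gi p ≤ gi u + 1 / c * ⟪p - v, u - p⟫ := by
  suffices 0 ≤ gi u - gi p + 1 / c * ⟪p - v, u - p⟫ by linarith
  refine nonneg_of_forall_nonneg_add_mul (b := 1 / (2 * c) * ‖u - p‖ ^ 2) fun t ht => ?_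
  have hmin := hp.1 (p + t • (u - p))
  have hconv : gi (p + t • (u - p)) ≤ (1 - t) * gi p + t * gi u := by
    rw [show p + t • (u - p) = (1 - t) • p + t • u by module]
    exact hgi.2 (mem_univ p) (mem_univ u) (by linarith [ht.2]) ht.1.le (by ring)
  have hsq : ‖p + t • (u - p) - v‖ ^ 2
      = ‖p - v‖ ^ 2 + 2 * t * ⟪p - v, u - p⟫ + t ^ 2 * ‖u - p‖ ^ 2 := by
    rw [show p + t • (u - p) - v = (p - v) + t • (u - p) by abel, norm_add_sq_real,
      real_inner_smul_right, norm_smul, Real.norm_eq_abs, abs_of_pos ht.1]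
    ring
  rw [hsq] at hmin
  have hscaled :
      0 ≤ t * (gi u - gi p + 1 / c * ⟪p - v, u - p⟫ + 1 / (2 * c) * ‖u - p‖ ^ 2 * t) := by
    have : 1 / (2 * c) * (2 * t * ⟪p - v, u - p⟫ + t ^ 2 * ‖u - p‖ ^ 2)
        = t * (1 / c * ⟪p - v, u - p⟫ + 1 / (2 * c) * ‖u - p‖ ^ 2 * t) := by
      field_simp
    nlinarith
  exact nonneg_of_mul_nonneg_right hscaled ht.1

lemma IsProx.le_sub_inner_sub_sq {E : Type*} [NormedAddCommGroup E] [InnerProductSpace ℝ E]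
    {c : ℝ} {gi : E → ℝ} {a b p : E} (hp : IsProx c gi (a - c • b) p) (hc : 0 < c)
    (hgi : ConvexOn ℝ univ gi) : gi p ≤ gi a - ⟪p - a, b⟫ - 1 / c * ‖p - a‖ ^ 2 := by
  have h := hp.le_add_inner hc hgi a
  have hinner : ⟪p - (a - c • b), a - p⟫ = -‖p - a‖ ^ 2 - c * ⟪p - a, b⟫ := by
    rw [show p - (a - c • b) = (p - a) + c • b by abel, show a - p = -(p - a) by abel,
      inner_add_left, inner_neg_right, inner_neg_right, real_inner_self_eq_norm_sq,
      real_inner_smul_left, real_inner_comm]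
    ring
  rw [hinner, mul_sub, show 1 / c * (c * ⟪p - a, b⟫) = ⟪p - a, b⟫ by field_simp] at h
  linarith

lemma sum_mul_le_sum_sq_add_sq {ι : Type*} (s : Finset ι) (a : ι → ℝ) (b : ℝ) :
    (∑ t ∈ s, a t) * b ≤ (∑ t ∈ s, a t ^ 2) / 2 + s.card * b ^ 2 / 2 := by
  rw [Finset.sum_mul]
  calc ∑ t ∈ s, a t * b ≤ ∑ t ∈ s, (a t ^ 2 + b ^ 2) / 2 :=
        Finset.sum_le_sum fun t _ => by linarith [two_mul_le_add_sq (a t) b]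
    _ = _ := by rw [← Finset.sum_div, Finset.sum_add_distrib, Finset.sum_const, nsmul_eq_mul]; ring

section Trajectory

variable {x : ℤ → PiLp 2 H}

omit [∀ i, InnerProductSpace ℝ (H i)] in
lemma sum_norm_apply_sub_eq_norm_sub {x0 : PiLp 2 H} {idx : ℕ → Fin m}
    (hx_init : ∀ n : ℤ, n ≤ 0 → x n = x0)
    (hx_agree : ∀ (k : ℕ) (j : Fin m), j ≠ idx k → x ((k : ℤ) + 1) j = x (k : ℤ) j) (h : ℤ) :
    ∑ j, ‖x (h + 1) j - x h j‖ = ‖x (h + 1) - x h‖ := by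
  rcases lt_or_ge h 0 with hneg | hnonneg
  · simp [hx_init h hneg.le, hx_init (h + 1) (by omega)]
  · lift h to ℕ using hnonneg
    exact sum_norm_apply_eq_norm_of_forall_ne (u := x (h + 1) - x h) (i := idx h) fun j hj => by
      rw [PiLp.sub_apply, hx_agree h j hj, sub_self]

omit [∀ i, InnerProductSpace ℝ (H i)] in
lemma norm_sub_xhatD_apply_le {d : ℕ → Fin m → ℕ} {τ k : ℕ} (hd : ∀ j, d k j ≤ τ) (j : Fin m) :
    ‖x k j - xhatD x d k j‖
      ≤ ∑ t ∈ Finset.range τ, ‖x ((k : ℤ) - τ + t + 1) j - x ((k : ℤ) - τ + t) j‖ := by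
  let y : ℕ → H j := fun s => x ((k : ℤ) - τ + s) j
  calc ‖x k j - xhatD x d k j‖ = dist (y (τ - d k j)) (y τ) := by
        rw [dist_comm, dist_eq_norm]
        simp [y, xhatD, Nat.cast_sub (hd j)]
    _ ≤ ∑ t ∈ Finset.Ico (τ - d k j) τ, dist (y t) (y (t + 1)) :=
        dist_le_Ico_sum_dist y (Nat.sub_le _ _)
    _ ≤ ∑ t ∈ Finset.range τ, dist (y t) (y (t + 1)) :=
        Finset.sum_le_sum_of_subset_of_nonneg (fun t ht => by simp_all)
          fun _ _ _ => dist_nonneg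
    _ = _ := by
        refine Finset.sum_congr rfl fun t _ => ?_
        rw [dist_comm, dist_eq_norm]
        simp [y, add_assoc]

omit [∀ i, InnerProductSpace ℝ (H i)] in
lemma norm_map_sub_map_xhatD_le {E : Type*} [SeminormedAddCommGroup E] {F : PiLp 2 H → E} {K : ℝ}
    (hK : 0 ≤ K)
    (hF : ∀ (z : PiLp 2 H) (i : Fin m) (u u' : H i),
      ‖F (upd z i u) - F (upd z i u')‖ ≤ K * ‖u - u'‖)
    {x0 : PiLp 2 H} {idx : ℕ → Fin m} (hx_init : ∀ n : ℤ, n ≤ 0 → x n = x0)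
    (hx_agree : ∀ (k : ℕ) (j : Fin m), j ≠ idx k → x ((k : ℤ) + 1) j = x (k : ℤ) j)
    {d : ℕ → Fin m → ℕ} {τ k : ℕ} (hd : ∀ j, d k j ≤ τ) :
    ‖F (x k) - F (xhatD x d k)‖
      ≤ K * ∑ t ∈ Finset.range τ, ‖x ((k : ℤ) - τ + t + 1) - x ((k : ℤ) - τ + t)‖ := by
  refine (norm_sub_le_mul_sum_norm_apply_sub hF _ _).trans (mul_le_mul_of_nonneg_left ?_ hK)
  calc ∑ j, ‖x k j - xhatD x d k j‖
      ≤ ∑ j, ∑ t ∈ Finset.range τ, ‖x ((k : ℤ) - τ + t + 1) j - x ((k : ℤ) - τ + t) j‖ :=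
        Finset.sum_le_sum fun j _ => norm_sub_xhatD_apply_le hd j
    _ = _ := by
        rw [Finset.sum_comm]
        exact Finset.sum_congr rfl fun t _ => sum_norm_apply_sub_eq_norm_sub hx_init hx_agree _

omit [∀ i, InnerProductSpace ℝ (H i)] in
lemma alphaT_nonneg {c : ℝ} (hc : 0 ≤ c) (τ : ℕ) (x : ℤ → PiLp 2 H) (k : ℕ) :
    0 ≤ alphaT c τ x k :=
  mul_nonneg hc (Finset.sum_nonneg fun _ _ => by positivity)

omit [∀ i, InnerProductSpace ℝ (H i)] in
lemma alphaT_zero {x0 : PiLp 2 H} (hx_init : ∀ n : ℤ, n ≤ 0 → x n = x0) (c : ℝ) (τ : ℕ) :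
    alphaT c τ x 0 = 0 := by
  refine mul_eq_zero_of_right c (Finset.sum_eq_zero fun t ht => ?_)
  have ht : (t : ℤ) < τ := by exact_mod_cast Finset.mem_range.mp ht
  rw [hx_init _ (by omega), hx_init _ (by omega)]
  simp

omit [∀ i, InnerProductSpace ℝ (H i)] in
lemma alphaT_succ (c : ℝ) (τ : ℕ) (x : ℤ → PiLp 2 H) (k : ℕ) :
    alphaT c τ x (k + 1) = alphaT c τ x k + c * (τ * ‖x ((k : ℤ) + 1) - x k‖ ^ 2
      - ∑ t ∈ Finset.range τ, ‖x ((k : ℤ) - τ + t + 1) - x ((k : ℤ) - τ + t)‖ ^ 2) := by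
  set a : ℕ → ℝ := fun s => ‖x ((k : ℤ) - τ + s + 1) - x ((k : ℤ) - τ + s)‖ ^ 2
  have hshift : ∑ t ∈ Finset.range τ, ((t : ℝ) + 1) * a (t + 1)
      = ∑ t ∈ Finset.range τ, (t : ℝ) * a t + τ * a τ := by
    have := Finset.sum_range_succ' (fun t => (t : ℝ) * a t) τ
    rw [← Finset.sum_range_succ]
    simpa using this.symm
  have hlast : a τ = ‖x ((k : ℤ) + 1) - x k‖ ^ 2 := by simp [a]
  have hsucc : alphaT c τ x (k + 1) = c * ∑ t ∈ Finset.range τ, ((t : ℝ) + 1) * a (t + 1) := by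
    simp only [alphaT, a]
    congr 1
    refine Finset.sum_congr rfl fun t _ => ?_
    push_cast
    ring_nf
  rw [hsucc, hshift, ← hlast]
  change _ = c * ∑ t ∈ Finset.range τ, ((t : ℝ) + 1) * a t
    + c * (τ * a τ - ∑ t ∈ Finset.range τ, a t)
  simp only [add_mul, one_mul, Finset.sum_add_distrib]
  ring

end Trajectory

lemma half_lt_one_div_of_lt_two_div {γ D : ℝ} (hγ : 0 < γ) (h : γ < 2 / D) : D / 2 < 1 / γ := by
  rw [lt_div_iff₀ hγ]
  rcases lt_or_ge 0 D with hD | hD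
  · linarith [(lt_div_iff₀ hD).1 h]
  · nlinarith

variable [∀ i, CompleteSpace (H i)] in
theorem Fobj_add_alphaT_succ_le {τ : ℕ} {d : ℕ → Fin m → ℕ} (hd : ∀ (k : ℕ) (j : Fin m), d k j ≤ τ)
    {idx : ℕ → Fin m} {x : ℤ → PiLp 2 H} {x0 : PiLp 2 H}
    (hx_init : ∀ n : ℤ, n ≤ 0 → x n = x0)
    (hx_agree : ∀ (k : ℕ) (j : Fin m), j ≠ idx k → x ((k : ℤ) + 1) j = x (k : ℤ) j)
    {f : PiLp 2 H → ℝ} {f' : PiLp 2 H → PiLp 2 H} (hf_grad : ∀ z, HasGradientAt f (f' z) z)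
    {Lres : ℝ} (hLres : 0 ≤ Lres)
    (hf_lip_res : ∀ (z : PiLp 2 H) (i : Fin m) (u u' : H i),
      ‖f' (upd z i u) - f' (upd z i u')‖ ≤ Lres * ‖u - u'‖)
    {L : Fin m → ℝ}
    (hf_lip_blk : ∀ (z : PiLp 2 H) (i : Fin m) (u u' : H i),
      ‖f' (upd z i u) i - f' (upd z i u') i‖ ≤ L i * ‖u - u'‖)
    {g : ∀ i, H i → ℝ} (hg_convex : ∀ i, ConvexOn ℝ univ (g i))
    {γ : Fin m → ℝ} (hγ_pos : ∀ i, 0 < γ i)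
    (hx_prox : ∀ k : ℕ,
      IsProx (γ (idx k)) (g (idx k))
        (x (k : ℤ) (idx k) - γ (idx k) • f' (xhatD x d k) (idx k))
        (x ((k : ℤ) + 1) (idx k)))
    (hγ_rule : ∀ i, γ i < 2 / (L i + 2 * τ * Lres)) (k : ℕ) :
    Fobj f g (x (k + 1 : ℕ)) + alphaT (Lres / 2) τ x (k + 1)
      ≤ Fobj f g (x k) + alphaT (Lres / 2) τ x k := by
  set i := idx k
  set Δ := x ((k : ℤ) + 1) i - x k i
  set δ : ℕ → ℝ := fun t => ‖x ((k : ℤ) - τ + t + 1) - x ((k : ℤ) - τ + t)‖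
  have hnorm : ‖x ((k : ℤ) + 1) - x k‖ = ‖Δ‖ :=
    (sum_norm_apply_sub_eq_norm_sub hx_init hx_agree k).symm.trans <| Finset.sum_eq_single i
      (fun j _ hj => by rw [hx_agree k j hj, sub_self, norm_zero]) (by simp)
  have hf_step : f (x ((k : ℤ) + 1)) ≤ f (x k) + ⟪f' (x k) i, Δ⟫ + L i / 2 * ‖Δ‖ ^ 2 := by
    have := le_add_inner_add_sq_of_lipschitz_partial hf_grad (hf_lip_blk · i) (x k) (x k i)
      (x ((k : ℤ) + 1) i)
    rwa [upd_self, ← eq_upd_of_forall_ne (hx_agree k)] at this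
  have hg_step : g i (x ((k : ℤ) + 1) i)
      ≤ g i (x k i) - ⟪Δ, f' (xhatD x d k) i⟫ - 1 / γ i * ‖Δ‖ ^ 2 :=
    (hx_prox k).le_sub_inner_sub_sq (hγ_pos i) (hg_convex i)
  have hg_sum : ∑ j, g j (x ((k : ℤ) + 1) j)
      = ∑ j, g j (x k j) + (g i (x ((k : ℤ) + 1) i) - g i (x k i)) := by
    rw [← sub_eq_iff_eq_add', ← Finset.sum_sub_distrib]
    exact Finset.sum_eq_single i (fun j _ hj => by rw [hx_agree k j hj, sub_self]) (by simp)
  have hdelay : ⟪f' (x k) i, Δ⟫ - ⟪Δ, f' (xhatD x d k) i⟫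
      ≤ Lres * (∑ t ∈ Finset.range τ, δ t) * ‖Δ‖ := by
    calc _ = ⟪(f' (x k) - f' (xhatD x d k)) i, Δ⟫ := by
          rw [PiLp.sub_apply, real_inner_comm (f' (xhatD x d k) i) Δ, ← inner_sub_left]
      _ ≤ ‖f' (x k) - f' (xhatD x d k)‖ * ‖Δ‖ := (real_inner_le_norm _ _).trans
          (mul_le_mul_of_nonneg_right (PiLp.norm_apply_le _ _) (norm_nonneg _))
      _ ≤ _ := mul_le_mul_of_nonneg_right
          (norm_map_sub_map_xhatD_le hLres hf_lip_res hx_init hx_agree (hd k)) (norm_nonneg _)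
  have hyoung := mul_le_mul_of_nonneg_left
    (sum_mul_le_sum_sq_add_sq (Finset.range τ) δ ‖Δ‖) hLres
  have hcoef : (L i / 2 + τ * Lres - 1 / γ i) * ‖Δ‖ ^ 2 ≤ 0 := by
    have := half_lt_one_div_of_lt_two_div (hγ_pos i) (hγ_rule i)
    exact mul_nonpos_of_nonpos_of_nonneg (by linarith) (sq_nonneg _)
  rw [Finset.card_range] at hyoung
  rw [Nat.cast_succ, Fobj, Fobj, alphaT_succ, hnorm, hg_sum]
  linarith

theorem stmt17_general
    [∀ i, CompleteSpace (H i)]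
    (τ : ℕ) (d : ℕ → Fin m → ℕ) (hd : ∀ (k : ℕ) (j : Fin m), d k j ≤ min k τ)
    (idx : ℕ → Fin m)
    (x : ℤ → PiLp 2 H) (x0 : PiLp 2 H)
    (hx_init : ∀ n : ℤ, n ≤ 0 → x n = x0)
    (hx_agree : ∀ (k : ℕ) (j : Fin m), j ≠ idx k → x ((k : ℤ) + 1) j = x (k : ℤ) j)
    (f : PiLp 2 H → ℝ) (f' : PiLp 2 H → PiLp 2 H)
    (hf_grad : ∀ z : PiLp 2 H, HasGradientAt f (f' z) z)
    (Lres : ℝ) (hLres_pos : 0 < Lres)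
    (hf_lip_res : ∀ (z : PiLp 2 H) (i : Fin m) (u u' : H i),
      ‖f' (upd z i u) - f' (upd z i u')‖ ≤ Lres * ‖u - u'‖)
    (L : Fin m → ℝ)
    (hf_lip_blk : ∀ (z : PiLp 2 H) (i : Fin m) (u u' : H i),
      ‖f' (upd z i u) i - f' (upd z i u') i‖ ≤ L i * ‖u - u'‖)
    (g : ∀ i, H i → ℝ) (hg_convex : ∀ i, ConvexOn ℝ Set.univ (g i))
    (γ : Fin m → ℝ) (hγ_pos : ∀ i, 0 < γ i)
    (hx_prox : ∀ k : ℕ,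
      IsProx (γ (idx k)) (g (idx k))
        (x (k : ℤ) (idx k) - γ (idx k) • f' (xhatD x d k) (idx k))
        (x ((k : ℤ) + 1) (idx k)))
    (hγ_rule : ∀ i, γ i < 2 / (L i + 2 * τ * Lres)) :
    ∀ k : ℕ, Fobj f g (x (k : ℤ)) ≤ Fobj f g (x 0) := by
  let E : ℕ → ℝ := fun n => Fobj f g (x n) + alphaT (Lres / 2) τ x n
  have hE : Antitone E := antitone_nat_of_succ_le <|
    Fobj_add_alphaT_succ_le (fun k j => (hd k j).trans (min_le_right k τ)) hx_init hx_agree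
      hf_grad hLres_pos.le hf_lip_res hf_lip_blk hg_convex hγ_pos hx_prox hγ_rule
  intro k
  calc Fobj f g (x k) ≤ E k := le_add_of_nonneg_right (alphaT_nonneg (by positivity) τ x k)
    _ ≤ E 0 := hE k.zero_le
    _ = Fobj f g (x 0) := by simp [E, alphaT_zero hx_init]

/-- Corollary: monotonicity of the function values along the iterates
under the stepsize rule `γ_i < 2/(L_i + 2 τ L_res)`. -/
theorem stmt17
    [∀ i, CompleteSpace (H i)]
    (hm : 0 < m)
    (τ : ℕ) (d : ℕ → Fin m → ℕ) (hd : ∀ (k : ℕ) (j : Fin m), d k j ≤ min k τ)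
    (idx : ℕ → Fin m)
    (x : ℤ → PiLp 2 H) (x0 : PiLp 2 H)
    (hx_init : ∀ n : ℤ, n ≤ 0 → x n = x0)
    (hx_agree : ∀ (k : ℕ) (j : Fin m), j ≠ idx k → x ((k : ℤ) + 1) j = x (k : ℤ) j)
    (f : PiLp 2 H → ℝ) (f' : PiLp 2 H → PiLp 2 H)
    (hf_grad : ∀ z : PiLp 2 H, HasGradientAt f (f' z) z)
    (Lres : ℝ) (hLres_pos : 0 < Lres)
    (hf_lip_res : ∀ (z : PiLp 2 H) (i : Fin m) (u u' : H i),
      ‖f' (upd z i u) - f' (upd z i u')‖ ≤ Lres * ‖u - u'‖)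
    (L : Fin m → ℝ)
    (hf_lip_blk : ∀ (z : PiLp 2 H) (i : Fin m) (u u' : H i),
      ‖f' (upd z i u) i - f' (upd z i u') i‖ ≤ L i * ‖u - u'‖)
    (g : ∀ i, H i → ℝ) (hg_convex : ∀ i, ConvexOn ℝ Set.univ (g i))
    (hg_lsc : ∀ i, LowerSemicontinuous (g i))
    (γ : Fin m → ℝ) (hγ_pos : ∀ i, 0 < γ i)
    (hx_prox : ∀ k : ℕ,
      IsProx (γ (idx k)) (g (idx k))
        (x (k : ℤ) (idx k) - γ (idx k) • f' (xhatD x d k) (idx k))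
        (x ((k : ℤ) + 1) (idx k)))
    (hγ_rule : ∀ i, γ i < 2 / (L i + 2 * τ * Lres)) :
    ∀ k : ℕ, Fobj f g (x (k : ℤ)) ≤ Fobj f g (x 0) :=
  stmt17_general τ d hd idx x x0 hx_init hx_agree f f' hf_grad Lres hLres_pos hf_lip_res L
    hf_lip_blk g hg_convex γ hγ_pos hx_prox hγ_rule
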